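/- arXiv:1611.09749 — 2 statements merged into one kernel-verified Lean document; each statement's English description precedes it below -/
import Mathlib

section
/- Let R be a commutative integral domain with identity, G an ample Hausdorff groupoid, Γ a discrete group, and c : G → Γ a continuous cocycle. If (m, n) is a normaliser of D_R(G) in A_R(G) with m ∈ A_R(G)_g and n ∈ A_R(G)_{g⁻¹}, then mn = 1_{s(supp(n))} = 1_{r(supp(m))} and nm = 1_{s(supp(m))} = 1_{r(supp(n))}; in particular mn and nm are indicator functions of compact open subsets of G⁰. -/
/-!
Multiplication by an element `d` of the diagonal is pointwise: `(d * f)(η) = d(r η) f(η)` and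
`(f * d)(η) = f(η) d(s η)`. As `1_{s(supp m)}` lies in the diagonal and `m * 1_{s(supp m)} = m`,
the normaliser condition puts `mn = m 1_{s(supp m)} n` in the diagonal. Then `(mn) m = m` makes
`mn` nonzero on `r(supp m)`, and `n (mn) = n` makes it equal to `1` on `s(supp n)` (`R` has no
zero divisors). Conversely a point `η = αβ` of the support of `mn` is a unit, so `η = r α = s β`.
Hence `mn = 1_{s(supp n)}` and `s(supp n) = r(supp m)`; exchanging `m` and `n` gives the rest.
Associativity of the convolution holds because a compact support meets each fibre of the local
homeomorphisms `r` and `s` in a finite set.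
-/

structure GroupoidStruct (G : Type*) where
  src : G → G
  rng : G → G
  inv : G → G
  mul : G → G → G
  rng_src : ∀ a, rng (src a) = src a
  src_src : ∀ a, src (src a) = src a
  src_rng : ∀ a, src (rng a) = rng a
  rng_rng : ∀ a, rng (rng a) = rng a
  src_inv : ∀ a, src (inv a) = rng a
  rng_inv : ∀ a, rng (inv a) = src a
  src_mul : ∀ a b, src a = rng b → src (mul a b) = src b
  rng_mul : ∀ a b, src a = rng b → rng (mul a b) = rng a
  mul_assoc' : ∀ a b c, src a = rng b → src b = rng c →
    mul (mul a b) c = mul a (mul b c)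
  unit_mul : ∀ a, mul (rng a) a = a
  mul_unit : ∀ a, mul a (src a) = a
  inv_mul : ∀ a, mul (inv a) a = src a
  mul_inv : ∀ a, mul a (inv a) = rng a
  inv_inv : ∀ a, inv (inv a) = a

namespace GroupoidStruct

variable {G : Type*} (𝒢 : GroupoidStruct G)

/-- The unit space `G⁰` of the groupoid. -/
def units : Set G := {x | 𝒢.src x = x}

/-- The set product `UV` of two subsets of the groupoid. -/
def setMul (U V : Set G) : Set G :=
  {η | ∃ a ∈ U, ∃ b ∈ V, 𝒢.src a = 𝒢.rng b ∧ 𝒢.mul a b = η}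

/-- A bisection: a set on which the source and range maps are injective. -/
def IsBisection (U : Set G) : Prop := Set.InjOn 𝒢.src U ∧ Set.InjOn 𝒢.rng U

/-- A cocycle into a group: a groupoid homomorphism. -/
def IsCocycle {Γ : Type*} [Group Γ] (c : G → Γ) : Prop :=
  ∀ a b, 𝒢.src a = 𝒢.rng b → c (𝒢.mul a b) = c a * c b

end GroupoidStruct

/-- A Hausdorff étale topological groupoid (the Hausdorff condition is imposed via a
`T2Space` instance on `G`). -/
structure EtaleGroupoid (G : Type*) [TopologicalSpace G] extends GroupoidStruct G where
  continuous_src : Continuous src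
  continuous_rng : Continuous rng
  continuous_inv : Continuous inv
  continuousOn_mul : ContinuousOn (fun p : G × G => mul p.1 p.2) {p | src p.1 = rng p.2}
  etale_src : IsLocalHomeomorph src
  etale_rng : IsLocalHomeomorph rng

/-- An ample groupoid: an étale groupoid whose unit space has a basis of compact open sets. -/
structure AmpleGroupoid (G : Type*) [TopologicalSpace G] extends EtaleGroupoid G where
  ample : ∀ x, src x = x → ∀ U : Set G, IsOpen U → x ∈ U →
    ∃ K : Set G, IsCompact K ∧ IsOpen K ∧ x ∈ K ∧ K ⊆ U ∧ ∀ y ∈ K, src y = y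

/-- The convolution product on `R`-valued functions on the groupoid `G`:
`(f * g)(η) = ∑_{αβ = η} f(α) g(β)`. -/
noncomputable def conv {G : Type*} (𝒢 : GroupoidStruct G) {R : Type*} [CommRing R]
    (f g : G → R) : G → R :=
  fun η => ∑ᶠ (p : G × G) (_ : 𝒢.src p.1 = 𝒢.rng p.2 ∧ 𝒢.mul p.1 p.2 = η), f p.1 * g p.2

/-- The carrier of the Steinberg algebra `A_R(G)`: locally constant compactly supported
`R`-valued functions on `G`. -/
def SteinbergSet {G : Type*} [TopologicalSpace G] (𝒢 : GroupoidStruct G)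
    (R : Type*) [CommRing R] : Set (G → R) :=
  {f | IsLocallyConstant f ∧ IsCompact (Function.support f)}

/-- The diagonal subalgebra `D_R(G)`: elements of `A_R(G)` supported on the unit space. -/
def DiagSet {G : Type*} [TopologicalSpace G] (𝒢 : GroupoidStruct G)
    (R : Type*) [CommRing R] : Set (G → R) :=
  {f | f ∈ SteinbergSet 𝒢 R ∧ Function.support f ⊆ GroupoidStruct.units 𝒢}

/-- `f` is homogeneous of degree `g` for the grading induced by the cocycle `c`,
i.e. `supp f ⊆ c⁻¹(g)`. -/
def InGrade {G : Type*} {Γ : Type*} [Group Γ] {R : Type*} [CommRing R]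
    (c : G → Γ) (g : Γ) (f : G → R) : Prop :=
  ∀ η, f η ≠ 0 → c η = g

/-- A normaliser of the diagonal `D_R(G)` in `A_R(G)`: a pair `(m, n)` with
`m D n ∪ n D m ⊆ D`, `mnm = m` and `nmn = n`. -/
def IsNormaliser {G : Type*} [TopologicalSpace G] (𝒢 : GroupoidStruct G)
    (R : Type*) [CommRing R] (m n : G → R) : Prop :=
  m ∈ SteinbergSet 𝒢 R ∧ n ∈ SteinbergSet 𝒢 R ∧
  (∀ d ∈ DiagSet 𝒢 R, conv 𝒢 m (conv 𝒢 d n) ∈ DiagSet 𝒢 R ∧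
      conv 𝒢 n (conv 𝒢 d m) ∈ DiagSet 𝒢 R) ∧
  conv 𝒢 m (conv 𝒢 n m) = m ∧ conv 𝒢 n (conv 𝒢 m n) = n

/-- The involution `f*(η) = (f(η⁻¹))*` on `R`-valued functions on the groupoid. -/
def starF {G : Type*} (𝒢 : GroupoidStruct G) {R : Type*} [CommRing R] [StarRing R]
    (f : G → R) : G → R :=
  fun η => star (f (𝒢.inv η))

open Function

namespace GroupoidStruct

variable {G : Type*} (𝒢 : GroupoidStruct G) {a b u : G}

lemma rng_eq_self_of_mem_units (hu : u ∈ 𝒢.units) : 𝒢.rng u = u := by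
  rw [← hu, 𝒢.rng_src]

lemma inv_eq_self_of_mem_units (hu : u ∈ 𝒢.units) : 𝒢.inv u = u :=
  calc 𝒢.inv u = 𝒢.mul (𝒢.inv u) (𝒢.src (𝒢.inv u)) := (𝒢.mul_unit _).symm
    _ = 𝒢.mul (𝒢.inv u) u := by rw [𝒢.src_inv, 𝒢.rng_eq_self_of_mem_units hu]
    _ = u := (𝒢.inv_mul u).trans hu

lemma rng_inv_mul (h : 𝒢.rng a = 𝒢.rng b) : 𝒢.rng (𝒢.mul (𝒢.inv a) b) = 𝒢.src a := by
  rw [𝒢.rng_mul _ _ (by rw [𝒢.src_inv, h]), 𝒢.rng_inv]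

lemma src_inv_mul (h : 𝒢.rng a = 𝒢.rng b) : 𝒢.src (𝒢.mul (𝒢.inv a) b) = 𝒢.src b :=
  𝒢.src_mul _ _ (by rw [𝒢.src_inv, h])

lemma src_mul_inv (h : 𝒢.src a = 𝒢.src b) : 𝒢.src (𝒢.mul a (𝒢.inv b)) = 𝒢.rng b := by
  rw [𝒢.src_mul _ _ (by rw [𝒢.rng_inv, h]), 𝒢.src_inv]

lemma rng_mul_inv (h : 𝒢.src a = 𝒢.src b) : 𝒢.rng (𝒢.mul a (𝒢.inv b)) = 𝒢.rng a :=
  𝒢.rng_mul _ _ (by rw [𝒢.rng_inv, h])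

lemma inv_mul_cancel_left (h : 𝒢.src a = 𝒢.rng b) : 𝒢.mul (𝒢.inv a) (𝒢.mul a b) = b := by
  rw [← 𝒢.mul_assoc' _ _ _ (𝒢.src_inv a) h, 𝒢.inv_mul, h, 𝒢.unit_mul]

lemma mul_inv_cancel_left (h : 𝒢.rng a = 𝒢.rng b) : 𝒢.mul a (𝒢.mul (𝒢.inv a) b) = b := by
  rw [← 𝒢.mul_assoc' _ _ _ (𝒢.rng_inv a).symm (by rw [𝒢.src_inv, h]), 𝒢.mul_inv, h,
    𝒢.unit_mul]

lemma mul_inv_cancel_right (h : 𝒢.src a = 𝒢.rng b) : 𝒢.mul (𝒢.mul a b) (𝒢.inv b) = a := by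
  rw [𝒢.mul_assoc' _ _ _ h (𝒢.rng_inv b).symm, 𝒢.mul_inv, ← h, 𝒢.mul_unit]

lemma inv_mul_cancel_right (h : 𝒢.src a = 𝒢.src b) : 𝒢.mul (𝒢.mul a (𝒢.inv b)) b = a := by
  rw [𝒢.mul_assoc' _ _ _ (by rw [𝒢.rng_inv, h]) (𝒢.src_inv b), 𝒢.inv_mul, ← h, 𝒢.mul_unit]

end GroupoidStruct

section Convolution

variable {G : Type*} (𝒢 : GroupoidStruct G) {R : Type*} [CommRing R]

lemma conv_apply_left (f g : G → R) (η : G) :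
    conv 𝒢 f g η = ∑ᶠ a ∈ {a | 𝒢.rng a = 𝒢.rng η}, f a * g (𝒢.mul (𝒢.inv a) η) := by
  symm
  refine finsum_mem_eq_of_bijOn (fun a => (a, 𝒢.mul (𝒢.inv a) η)) ⟨?_, ?_, ?_⟩ fun _ _ => rfl
  · intro a (ha : 𝒢.rng a = 𝒢.rng η)
    exact ⟨(𝒢.rng_inv_mul ha).symm, 𝒢.mul_inv_cancel_left ha⟩
  · exact fun a _ a' _ h => congrArg Prod.fst h
  · rintro ⟨a, b⟩ ⟨hab, rfl⟩
    exact ⟨a, 𝒢.rng_mul a b hab |>.symm, by simp only [𝒢.inv_mul_cancel_left hab]⟩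

lemma conv_apply_right (f g : G → R) (η : G) :
    conv 𝒢 f g η = ∑ᶠ b ∈ {b | 𝒢.src b = 𝒢.src η}, f (𝒢.mul η (𝒢.inv b)) * g b := by
  symm
  refine finsum_mem_eq_of_bijOn (fun b => (𝒢.mul η (𝒢.inv b), b)) ⟨?_, ?_, ?_⟩ fun _ _ => rfl
  · intro b (hb : 𝒢.src b = 𝒢.src η)
    exact ⟨𝒢.src_mul_inv hb.symm, 𝒢.inv_mul_cancel_right hb.symm⟩
  · exact fun b _ b' _ h => congrArg Prod.snd h
  · rintro ⟨a, b⟩ ⟨hab, rfl⟩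
    exact ⟨b, 𝒢.src_mul a b hab |>.symm, by simp only [𝒢.mul_inv_cancel_right hab]⟩

lemma support_conv_subset (f g : G → R) :
    support (conv 𝒢 f g) ⊆ 𝒢.setMul (support f) (support g) := by
  intro η hη
  rw [mem_support, conv_apply_left] at hη
  obtain ⟨a, ha, hne⟩ := exists_ne_zero_of_finsum_mem_ne_zero hη
  exact ⟨a, left_ne_zero_of_mul hne, _, right_ne_zero_of_mul hne, (𝒢.rng_inv_mul ha).symm,
    𝒢.mul_inv_cancel_left ha⟩

lemma conv_diag_left {d : G → R} (hd : support d ⊆ 𝒢.units) (f : G → R) (η : G) :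
    conv 𝒢 d f η = d (𝒢.rng η) * f η := by
  have hunit : 𝒢.rng η ∈ 𝒢.units := 𝒢.src_rng η
  rw [conv_apply_left, finsum_mem_eq_sum_of_subset _ (t := {𝒢.rng η}), Finset.sum_singleton,
    𝒢.inv_eq_self_of_mem_units hunit, 𝒢.unit_mul]
  · rintro a ⟨ha : 𝒢.rng a = 𝒢.rng η, hne⟩
    rw [Finset.coe_singleton, Set.mem_singleton_iff, ← ha,
      𝒢.rng_eq_self_of_mem_units (hd (left_ne_zero_of_mul hne))]
  · simpa using 𝒢.rng_rng η

lemma conv_diag_right {d : G → R} (hd : support d ⊆ 𝒢.units) (f : G → R) (η : G) :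
    conv 𝒢 f d η = f η * d (𝒢.src η) := by
  have hunit : 𝒢.src η ∈ 𝒢.units := 𝒢.src_src η
  rw [conv_apply_right, finsum_mem_eq_sum_of_subset _ (t := {𝒢.src η}), Finset.sum_singleton,
    𝒢.inv_eq_self_of_mem_units hunit, 𝒢.mul_unit]
  · rintro b ⟨hb : 𝒢.src b = 𝒢.src η, hne⟩
    rw [Finset.coe_singleton, Set.mem_singleton_iff, ← hb, hd (right_ne_zero_of_mul hne)]
  · simpa using 𝒢.src_src η

lemma conv_apply_eq_sum_left {f : G → R} {u : G} (hf : (support f ∩ 𝒢.rng ⁻¹' {u}).Finite)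
    (g : G → R) {η : G} (hη : 𝒢.rng η = u) :
    conv 𝒢 f g η = ∑ a ∈ hf.toFinset, f a * g (𝒢.mul (𝒢.inv a) η) := by
  rw [conv_apply_left]
  refine finsum_mem_eq_sum_of_subset _ ?_ fun a ha => ?_
  · rintro a ⟨ha : 𝒢.rng a = 𝒢.rng η, hne⟩
    simpa [ha, hη] using left_ne_zero_of_mul hne
  · simp only [Set.Finite.coe_toFinset] at ha
    exact ha.2.trans hη.symm

lemma conv_apply_eq_sum_right (f : G → R) {g : G → R} {u : G}
    (hg : (support g ∩ 𝒢.src ⁻¹' {u}).Finite) {η : G} (hη : 𝒢.src η = u) :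
    conv 𝒢 f g η = ∑ b ∈ hg.toFinset, f (𝒢.mul η (𝒢.inv b)) * g b := by
  rw [conv_apply_right]
  refine finsum_mem_eq_sum_of_subset _ ?_ fun b hb => ?_
  · rintro b ⟨hb : 𝒢.src b = 𝒢.src η, hne⟩
    simpa [hb, hη] using right_ne_zero_of_mul hne
  · simp only [Set.Finite.coe_toFinset] at hb
    exact hb.2.trans hη.symm

theorem conv_assoc {f h : G → R} (hf : ∀ u, (support f ∩ 𝒢.rng ⁻¹' {u}).Finite) (g : G → R)
    (hh : ∀ u, (support h ∩ 𝒢.src ⁻¹' {u}).Finite) :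
    conv 𝒢 (conv 𝒢 f g) h = conv 𝒢 f (conv 𝒢 g h) := by
  funext η
  have rng_of_mem {a} (ha : a ∈ (hf (𝒢.rng η)).toFinset) : 𝒢.rng a = 𝒢.rng η :=
    ((Set.Finite.mem_toFinset _).1 ha).2
  have src_of_mem {c} (hc : c ∈ (hh (𝒢.src η)).toFinset) : 𝒢.src c = 𝒢.src η :=
    ((Set.Finite.mem_toFinset _).1 hc).2
  calc conv 𝒢 (conv 𝒢 f g) h η
      = ∑ c ∈ (hh (𝒢.src η)).toFinset, ∑ a ∈ (hf (𝒢.rng η)).toFinset,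
          f a * g (𝒢.mul (𝒢.inv a) (𝒢.mul η (𝒢.inv c))) * h c := by
        rw [conv_apply_eq_sum_right 𝒢 _ (hh _) rfl]
        refine Finset.sum_congr rfl fun c hc => ?_
        rw [conv_apply_eq_sum_left 𝒢 (hf _) g (𝒢.rng_mul_inv (src_of_mem hc).symm),
          Finset.sum_mul]
    _ = ∑ a ∈ (hf (𝒢.rng η)).toFinset, ∑ c ∈ (hh (𝒢.src η)).toFinset,
          f a * (g (𝒢.mul (𝒢.mul (𝒢.inv a) η) (𝒢.inv c)) * h c) := by
        rw [Finset.sum_comm]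
        refine Finset.sum_congr rfl fun a ha => Finset.sum_congr rfl fun c hc => ?_
        rw [← mul_assoc, 𝒢.mul_assoc' _ _ _ (by rw [𝒢.src_inv, rng_of_mem ha])
          (by rw [𝒢.rng_inv, src_of_mem hc])]
    _ = conv 𝒢 f (conv 𝒢 g h) η := by
        rw [conv_apply_eq_sum_left 𝒢 (hf _) _ rfl]
        refine Finset.sum_congr rfl fun a ha => ?_
        rw [conv_apply_eq_sum_right 𝒢 g (hh _) (𝒢.src_inv_mul (rng_of_mem ha)), Finset.mul_sum]

lemma conv_indicator_eq_self {K : Set G} (hK : K ⊆ 𝒢.units) {f : G → R}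
    (hf : 𝒢.src '' support f ⊆ K) : conv 𝒢 f (K.indicator fun _ => 1) = f := by
  funext η
  rw [conv_diag_right 𝒢 ((Set.support_indicator_subset).trans hK)]
  by_cases hη : f η = 0
  · rw [hη, zero_mul]
  · rw [Set.indicator_of_mem (hf ⟨η, hη, rfl⟩), mul_one]

theorem conv_eq_indicator_src_image [NoZeroDivisors R] {m n : G → R}
    (hunits : support (conv 𝒢 m n) ⊆ 𝒢.units) (hm : conv 𝒢 (conv 𝒢 m n) m = m)
    (hn : conv 𝒢 n (conv 𝒢 m n) = n) :
    conv 𝒢 m n = (𝒢.src '' support n).indicator (fun _ => 1) ∧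
      𝒢.src '' support n = 𝒢.rng '' support m := by
  set p := conv 𝒢 m n
  have hm_at (a : G) : p (𝒢.rng a) * m a = m a := by
    rw [← conv_diag_left 𝒢 hunits, hm]
  have hn_at (b : G) : n b * p (𝒢.src b) = n b := by
    rw [← conv_diag_right 𝒢 hunits, hn]
  have mem_images {η} (hη : η ∈ support p) :
      η ∈ 𝒢.rng '' support m ∧ η ∈ 𝒢.src '' support n := by
    obtain ⟨a, ha, b, hb, hab, rfl⟩ := support_conv_subset 𝒢 m n hη
    have hunit := hunits hη
    refine ⟨⟨a, ha, ?_⟩, ⟨b, hb, ?_⟩⟩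
    · rw [← 𝒢.rng_mul a b hab, 𝒢.rng_eq_self_of_mem_units hunit]
    · rw [← 𝒢.src_mul a b hab, hunit]
  refine ⟨funext fun η => ?_, Set.Subset.antisymm ?_ ?_⟩
  · by_cases hη : η ∈ 𝒢.src '' support n
    · obtain ⟨b, hb, rfl⟩ := hη
      rw [Set.indicator_of_mem (Set.mem_image_of_mem _ hb), ← mul_eq_left₀ hb, hn_at]
    · rw [Set.indicator_of_notMem hη]
      by_contra hne
      exact hη (mem_images hne).2
  · rintro _ ⟨b, hb, rfl⟩
    exact (mem_images (right_ne_zero_of_mul (a := n b) (by rwa [hn_at]))).1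
  · rintro _ ⟨a, ha, rfl⟩
    exact (mem_images (left_ne_zero_of_mul (b := m a) (by rwa [hm_at]))).2

end Convolution

lemma IsCompact.finite_inter_preimage_singleton {X Y : Type*} [TopologicalSpace X]
    [TopologicalSpace Y] {K : Set X} (hK : IsCompact K) {φ : X → Y} (hφ : IsLocalHomeomorph φ)
    (y : Y) : (K ∩ φ ⁻¹' {y}).Finite := by
  choose e hmem hφe using hφ
  obtain ⟨t, -, hcover⟩ := hK.elim_nhds_subcover (fun x => (e x).source)
    fun x _ => (e x).open_source.mem_nhds (hmem x)
  have hsub : K ∩ φ ⁻¹' {y} ⊆ ⋃ x ∈ t, (e x).source ∩ φ ⁻¹' {y} := fun a ⟨haK, ha⟩ => by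
    obtain ⟨x, hx, hax⟩ := Set.mem_iUnion₂.1 (hcover haK)
    exact Set.mem_iUnion₂.2 ⟨x, hx, hax, ha⟩
  refine (t.finite_toSet.biUnion fun x _ => ?_).subset hsub
  refine Set.Subsingleton.finite fun a ha a' ha' => (e x).injOn ha.1 ha'.1 ?_
  rw [← hφe x]
  exact ha.2.trans ha'.2.symm

lemma IsLocallyConstant.isClopen_support {X Y : Type*} [TopologicalSpace X] [Zero Y] {f : X → Y}
    (hf : IsLocallyConstant f) : IsClopen (support f) :=
  (hf.isClopen_fiber 0).compl

lemma GroupoidStruct.src_image_subset_units {G : Type*} (𝒢 : GroupoidStruct G) (s : Set G) :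
    𝒢.src '' s ⊆ 𝒢.units := by
  rintro _ ⟨a, -, rfl⟩
  exact 𝒢.src_src a

lemma IsNormaliser.symm {G : Type*} [TopologicalSpace G] {𝒢 : GroupoidStruct G} {R : Type*}
    [CommRing R] {m n : G → R} (h : IsNormaliser 𝒢 R m n) : IsNormaliser 𝒢 R n m :=
  ⟨h.2.1, h.1, fun d hd => (h.2.2.1 d hd).symm, h.2.2.2.2, h.2.2.2.1⟩

lemma indicator_one_mem_diagSet {G : Type*} [TopologicalSpace G] [T2Space G]
    (𝒢 : GroupoidStruct G) (R : Type*) [CommRing R] {K : Set G} (hK : IsCompact K)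
    (hK' : IsOpen K) (hKu : K ⊆ 𝒢.units) : K.indicator (fun _ => (1 : R)) ∈ DiagSet 𝒢 R := by
  have hlc : IsLocallyConstant (K.indicator fun _ => (1 : R)) :=
    (LocallyConstant.indicator (LocallyConstant.const G 1) ⟨hK.isClosed, hK'⟩).isLocallyConstant
  exact ⟨⟨hlc, hK.of_isClosed_subset hlc.isClopen_support.isClosed Set.support_indicator_subset⟩,
    Set.support_indicator_subset.trans hKu⟩

namespace EtaleGroupoid

variable {G : Type*} [TopologicalSpace G] (𝒢 : EtaleGroupoid G) {R : Type*} [CommRing R]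

theorem conv_assoc_of_isCompact {f h : G → R} (hf : IsCompact (support f)) (g : G → R)
    (hh : IsCompact (support h)) :
    conv 𝒢.toGroupoidStruct (conv 𝒢.toGroupoidStruct f g) h =
      conv 𝒢.toGroupoidStruct f (conv 𝒢.toGroupoidStruct g h) :=
  conv_assoc _ (hf.finite_inter_preimage_singleton 𝒢.etale_rng) g
    (hh.finite_inter_preimage_singleton 𝒢.etale_src)

theorem isCompact_isOpen_src_image_support {f : G → R}
    (hf : f ∈ SteinbergSet 𝒢.toGroupoidStruct R) :
    IsCompact (𝒢.src '' support f) ∧ IsOpen (𝒢.src '' support f) :=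
  ⟨hf.2.image 𝒢.continuous_src, 𝒢.etale_src.isOpenMap _ hf.1.isClopen_support.isOpen⟩

theorem _root_.IsNormaliser.conv_eq_indicator [T2Space G] [NoZeroDivisors R] {m n : G → R}
    (h : IsNormaliser 𝒢.toGroupoidStruct R m n) :
    conv 𝒢.toGroupoidStruct m n = (𝒢.src '' support n).indicator (fun _ => 1) ∧
      𝒢.src '' support n = 𝒢.rng '' support m := by
  obtain ⟨hm, hn, hdiag, hmnm, hnmn⟩ := h
  obtain ⟨hK, hK'⟩ := 𝒢.isCompact_isOpen_src_image_support hm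
  have hKu := 𝒢.src_image_subset_units (support m)
  have hmn_diag : conv 𝒢.toGroupoidStruct m n ∈ DiagSet 𝒢.toGroupoidStruct R := by
    have hmdn := (hdiag _ (indicator_one_mem_diagSet _ R hK hK' hKu)).1
    rwa [← 𝒢.conv_assoc_of_isCompact hm.2 _ hn.2,
      conv_indicator_eq_self _ hKu subset_rfl] at hmdn
  refine conv_eq_indicator_src_image _ hmn_diag.2 ?_ hnmn
  rw [𝒢.conv_assoc_of_isCompact hm.2 _ hm.2, hmnm]

end EtaleGroupoid

theorem normaliser_mul_eq_indicator_general {G : Type*} [TopologicalSpace G] [T2Space G]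
    {R : Type*} [CommRing R] [IsDomain R] (𝒢 : AmpleGroupoid G)
    (m n : G → R)
    (hnorm : IsNormaliser 𝒢.toGroupoidStruct R m n) :
    conv 𝒢.toGroupoidStruct m n
        = Set.indicator (𝒢.toGroupoidStruct.src '' Function.support n) (fun _ => (1 : R)) ∧
    𝒢.toGroupoidStruct.src '' Function.support n
        = 𝒢.toGroupoidStruct.rng '' Function.support m ∧
    conv 𝒢.toGroupoidStruct n m
        = Set.indicator (𝒢.toGroupoidStruct.src '' Function.support m) (fun _ => (1 : R)) ∧
    𝒢.toGroupoidStruct.src '' Function.support m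
        = 𝒢.toGroupoidStruct.rng '' Function.support n ∧
    IsCompact (𝒢.toGroupoidStruct.src '' Function.support n) ∧
    IsOpen (𝒢.toGroupoidStruct.src '' Function.support n) ∧
    𝒢.toGroupoidStruct.src '' Function.support n ⊆ GroupoidStruct.units 𝒢.toGroupoidStruct ∧
    IsCompact (𝒢.toGroupoidStruct.src '' Function.support m) ∧
    IsOpen (𝒢.toGroupoidStruct.src '' Function.support m) ∧
    𝒢.toGroupoidStruct.src '' Function.support m ⊆ GroupoidStruct.units 𝒢.toGroupoidStruct := by
  obtain ⟨hmn, hsrc_n⟩ := hnorm.conv_eq_indicator 𝒢.toEtaleGroupoid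
  obtain ⟨hnm, hsrc_m⟩ := hnorm.symm.conv_eq_indicator 𝒢.toEtaleGroupoid
  obtain ⟨hm_cpt, hm_open⟩ := 𝒢.isCompact_isOpen_src_image_support hnorm.1
  obtain ⟨hn_cpt, hn_open⟩ := 𝒢.isCompact_isOpen_src_image_support hnorm.2.1
  exact ⟨hmn, hsrc_n, hnm, hsrc_m, hn_cpt, hn_open, 𝒢.src_image_subset_units _, hm_cpt, hm_open,
    𝒢.src_image_subset_units _⟩

/-- If `(m, n)` is a normaliser of `D_R(G)` with `m` of degree `g` and `n` of degree `g⁻¹`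
for the grading induced by a continuous cocycle `c : G → Γ`, then
`mn = 1_{s(supp n)} = 1_{r(supp m)}` and `nm = 1_{s(supp m)} = 1_{r(supp n)}`; in particular
`mn` and `nm` are indicator functions of compact open subsets of `G⁰`. -/
theorem normaliser_mul_eq_indicator {G : Type*} [TopologicalSpace G] [T2Space G]
    {R : Type*} [CommRing R] [IsDomain R] (𝒢 : AmpleGroupoid G)
    {Γ : Type*} [Group Γ] (c : G → Γ) (hc : 𝒢.toGroupoidStruct.IsCocycle c)
    (hcont : IsLocallyConstant c) (g : Γ) (m n : G → R)
    (hnorm : IsNormaliser 𝒢.toGroupoidStruct R m n)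
    (hm : InGrade c g m) (hn : InGrade c g⁻¹ n) :
    conv 𝒢.toGroupoidStruct m n
        = Set.indicator (𝒢.toGroupoidStruct.src '' Function.support n) (fun _ => (1 : R)) ∧
    𝒢.toGroupoidStruct.src '' Function.support n
        = 𝒢.toGroupoidStruct.rng '' Function.support m ∧
    conv 𝒢.toGroupoidStruct n m
        = Set.indicator (𝒢.toGroupoidStruct.src '' Function.support m) (fun _ => (1 : R)) ∧
    𝒢.toGroupoidStruct.src '' Function.support m
        = 𝒢.toGroupoidStruct.rng '' Function.support n ∧
    IsCompact (𝒢.toGroupoidStruct.src '' Function.support n) ∧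
    IsOpen (𝒢.toGroupoidStruct.src '' Function.support n) ∧
    𝒢.toGroupoidStruct.src '' Function.support n ⊆ GroupoidStruct.units 𝒢.toGroupoidStruct ∧
    IsCompact (𝒢.toGroupoidStruct.src '' Function.support m) ∧
    IsOpen (𝒢.toGroupoidStruct.src '' Function.support m) ∧
    𝒢.toGroupoidStruct.src '' Function.support m ⊆ GroupoidStruct.units 𝒢.toGroupoidStruct :=
  normaliser_mul_eq_indicator_general 𝒢 m n hnorm
end

section
/- Let G be an ample Hausdorff groupoid with continuous cocycle c : G → Γ, and let (m, n) ∈ A_R(G)_g × A_R(G)_{g⁻¹} be a normaliser of D_R(G) over a commutative integral domain R with identity such that supp(m) is a compact open bisection with supp(n) = supp(m)⁻¹. Then for every compact open subset U of s(supp(m)), one has m * 1_U * n = 1_{r(supp(m) ∩ s⁻¹(U))}. -/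
/-!
Because `supp m` is a bisection and `supp n = (supp m)⁻¹`, every convolution involved has at
most one composable pair of nonzero factors over each arrow: `(f * g)(r a) = f(a) g(a⁻¹)` for `f`
on `supp m` and `g` on its inverse, and convolving with a function on the unit space is pointwise
multiplication. So `1_U * n` is `n` cut down to `r⁻¹(U)`, and `m * (1_U * n)` is supported on
`r(supp m ∩ s⁻¹(U))` with value `m(a) n(a⁻¹)` at `r(a)`. This value is `1`: as `m * n` lives on
the unit space, `n m n = n` at `a⁻¹` reads `n(a⁻¹) = n(a⁻¹) m(a) n(a⁻¹)`, and `n(a⁻¹) ≠ 0`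
cancels in the domain `R`.
-/

namespace GroupoidStruct

variable {G : Type*} (𝒢 : GroupoidStruct G)

theorem rng_eq_self_of_mem_units_s19 {x : G} (hx : x ∈ 𝒢.units) : 𝒢.rng x = x := by
  rw [← show 𝒢.src x = x from hx, 𝒢.rng_src]

theorem image_src_subset_units (B : Set G) : 𝒢.src '' B ⊆ 𝒢.units := by
  rintro _ ⟨a, -, rfl⟩
  exact 𝒢.src_src a

theorem eq_inv_of_src_eq_rng {B : Set G} (hB : Set.InjOn 𝒢.src B) {a b : G} (ha : a ∈ B)
    (hb : 𝒢.inv b ∈ B) (hab : 𝒢.src a = 𝒢.rng b) : b = 𝒢.inv a := by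
  rw [← hB hb ha (by rw [𝒢.src_inv, hab]), 𝒢.inv_inv]

end GroupoidStruct

section Convolution

variable {G : Type*} {R : Type*} [CommRing R] (𝒢 : GroupoidStruct G)

theorem conv_apply_eq_mul_of_unique {f g : G → R} {η : G} (a b : G)
    (hcomp : 𝒢.src a = 𝒢.rng b) (hmul : 𝒢.mul a b = η)
    (huniq : ∀ p : G × G, 𝒢.src p.1 = 𝒢.rng p.2 → 𝒢.mul p.1 p.2 = η →
      f p.1 ≠ 0 → g p.2 ≠ 0 → p = (a, b)) :
    conv 𝒢 f g η = f a * g b := by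
  classical
  unfold conv
  simp_rw [finsum_eq_if]
  rw [finsum_eq_single _ (a, b) fun p hp => ?_, if_pos ⟨hcomp, hmul⟩]
  split_ifs with h
  · by_contra hne
    exact hp (huniq p h.1 h.2 (left_ne_zero_of_mul hne) (right_ne_zero_of_mul hne))
  · rfl

theorem exists_of_conv_apply_ne_zero {f g : G → R} {η : G} (h : conv 𝒢 f g η ≠ 0) :
    ∃ p : G × G, 𝒢.src p.1 = 𝒢.rng p.2 ∧ 𝒢.mul p.1 p.2 = η ∧ f p.1 ≠ 0 ∧ g p.2 ≠ 0 := by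
  by_contra! hc
  refine h (finsum_eq_zero_of_forall_eq_zero fun p => ?_)
  classical
  rw [finsum_eq_if]
  split_ifs with hp
  · by_cases hf : f p.1 = 0
    · rw [hf, zero_mul]
    · rw [hc p hp.1 hp.2 hf, mul_zero]
  · rfl

theorem conv_apply_of_support_subset_units_left {d : G → R}
    (hd : Function.support d ⊆ 𝒢.units) (f : G → R) (η : G) :
    conv 𝒢 d f η = d (𝒢.rng η) * f η := by
  refine conv_apply_eq_mul_of_unique 𝒢 _ _ (𝒢.src_rng η) (𝒢.unit_mul η)
    fun p hcomp hmul hd₁ _ => ?_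
  have hp₁ : p.1 = 𝒢.rng p.2 := by rw [← hcomp, show 𝒢.src p.1 = p.1 from hd hd₁]
  have hp₂ : p.2 = η := by rw [← hmul, hp₁, 𝒢.unit_mul]
  exact Prod.ext (by rw [hp₁, hp₂]) hp₂

theorem conv_apply_of_support_subset_units_right {d : G → R}
    (hd : Function.support d ⊆ 𝒢.units) (f : G → R) (η : G) :
    conv 𝒢 f d η = f η * d (𝒢.src η) := by
  refine conv_apply_eq_mul_of_unique 𝒢 _ _ (𝒢.rng_src η).symm (𝒢.mul_unit η)
    fun p hcomp hmul _ hd₂ => ?_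
  have hp₂ : p.2 = 𝒢.src p.1 := by rw [hcomp, 𝒢.rng_eq_self_of_mem_units_s19 (hd hd₂)]
  have hp₁ : p.1 = η := by rw [← hmul, hp₂, 𝒢.mul_unit]
  exact Prod.ext hp₁ (by rw [hp₂, hp₁])

theorem conv_indicator_of_subset_units_left {U : Set G} (hU : U ⊆ 𝒢.units) (f : G → R) :
    conv 𝒢 (U.indicator fun _ => (1 : R)) f = (𝒢.rng ⁻¹' U).indicator f := by
  have hsupp : Function.support (U.indicator fun _ => (1 : R)) ⊆ 𝒢.units :=
    Set.support_indicator_subset.trans hU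
  ext η
  rw [conv_apply_of_support_subset_units_left 𝒢 hsupp]
  by_cases hη : 𝒢.rng η ∈ U <;> simp [hη]

variable {B : Set G} {f g : G → R}

theorem exists_of_conv_apply_ne_zero_of_injOn_src (hB : Set.InjOn 𝒢.src B)
    (hf : Function.support f ⊆ B) (hg : Function.support g ⊆ 𝒢.inv ⁻¹' B) {η : G}
    (h : conv 𝒢 f g η ≠ 0) : ∃ a, f a ≠ 0 ∧ g (𝒢.inv a) ≠ 0 ∧ 𝒢.rng a = η := by
  obtain ⟨p, hcomp, hmul, hf₁, hg₂⟩ := exists_of_conv_apply_ne_zero 𝒢 h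
  have hp₂ := 𝒢.eq_inv_of_src_eq_rng hB (hf hf₁) (hg hg₂) hcomp
  exact ⟨p.1, hf₁, hp₂ ▸ hg₂, by rw [← hmul, hp₂, 𝒢.mul_inv]⟩

theorem conv_apply_rng_of_isBisection (hB : 𝒢.IsBisection B)
    (hf : Function.support f ⊆ B) (hg : Function.support g ⊆ 𝒢.inv ⁻¹' B) {a : G}
    (ha : a ∈ B) : conv 𝒢 f g (𝒢.rng a) = f a * g (𝒢.inv a) := by
  refine conv_apply_eq_mul_of_unique 𝒢 _ _ (𝒢.rng_inv a).symm (𝒢.mul_inv a)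
    fun p hcomp hmul hf₁ hg₂ => ?_
  have hp₂ := 𝒢.eq_inv_of_src_eq_rng hB.1 (hf hf₁) (hg hg₂) hcomp
  have hp₁ : p.1 = a := hB.2 (hf hf₁) ha (by rw [← hmul, hp₂, 𝒢.mul_inv])
  exact Prod.ext hp₁ (by rw [hp₂, hp₁])

theorem support_conv_subset_units (hB : Set.InjOn 𝒢.src B)
    (hf : Function.support f ⊆ B) (hg : Function.support g ⊆ 𝒢.inv ⁻¹' B) :
    Function.support (conv 𝒢 f g) ⊆ 𝒢.units := by
  intro η h
  obtain ⟨a, -, -, rfl⟩ := exists_of_conv_apply_ne_zero_of_injOn_src 𝒢 hB hf hg h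
  exact 𝒢.src_rng a

theorem conv_eq_indicator_of_isBisection (hB : 𝒢.IsBisection B)
    (hf : Function.support f ⊆ B) (hg : Function.support g ⊆ 𝒢.inv ⁻¹' B) {S : Set G}
    (hSB : S ⊆ B) (hfg : ∀ a ∈ B, f a * g (𝒢.inv a) = S.indicator (fun _ => 1) a) :
    conv 𝒢 f g = (𝒢.rng '' S).indicator fun _ => 1 := by
  ext η
  by_cases hη : η ∈ 𝒢.rng '' B
  · obtain ⟨a, ha, rfl⟩ := hη
    rw [conv_apply_rng_of_isBisection 𝒢 hB hf hg ha, hfg a ha]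
    by_cases haS : a ∈ S <;> simp [haS, hB.2.mem_image_iff hSB ha]
  · rw [Set.indicator_of_notMem fun h => hη (Set.image_mono hSB h)]
    by_contra h
    obtain ⟨a, ha, -, rfl⟩ := exists_of_conv_apply_ne_zero_of_injOn_src 𝒢 hB.1 hf hg h
    exact hη (Set.mem_image_of_mem _ (hf ha))

theorem mul_apply_inv_eq_one_of_conv_conv_eq [IsDomain R] {m n : G → R}
    (hB : 𝒢.IsBisection (Function.support m))
    (hn : Function.support n = 𝒢.inv ⁻¹' Function.support m)
    (hnmn : conv 𝒢 n (conv 𝒢 m n) = n) {a : G} (ha : m a ≠ 0) :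
    m a * n (𝒢.inv a) = 1 := by
  have hmn := support_conv_subset_units 𝒢 hB.1 subset_rfl hn.subset
  have hna : n (𝒢.inv a) ≠ 0 := by
    rw [← Function.mem_support, hn, Set.mem_preimage, 𝒢.inv_inv]
    exact ha
  have key : n (𝒢.inv a) * (m a * n (𝒢.inv a)) = n (𝒢.inv a) * 1 := by
    rw [mul_one, ← conv_apply_rng_of_isBisection 𝒢 hB subset_rfl hn.subset ha, ← 𝒢.src_inv,
      ← conv_apply_of_support_subset_units_right 𝒢 hmn, hnmn]
  exact mul_left_cancel₀ hna key

end Convolution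

theorem normaliser_conjugation_indicator_general {G : Type*} [TopologicalSpace G]
    {R : Type*} [CommRing R] [IsDomain R] (𝒢 : AmpleGroupoid G) (m n : G → R)
    (hnorm : IsNormaliser 𝒢.toGroupoidStruct R m n)
    (hmb : 𝒢.toGroupoidStruct.IsBisection (Function.support m))
    (hninv : Function.support n = 𝒢.toGroupoidStruct.inv '' Function.support m) :
    ∀ U : Set G, IsCompact U → IsOpen U →
      U ⊆ 𝒢.toGroupoidStruct.src '' Function.support m →
      conv 𝒢.toGroupoidStruct m
          (conv 𝒢.toGroupoidStruct (Set.indicator U (fun _ => (1 : R))) n)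
        = Set.indicator
            (𝒢.toGroupoidStruct.rng ''
              (Function.support m ∩ 𝒢.toGroupoidStruct.src ⁻¹' U))
            (fun _ => (1 : R)) := by
  intro U _ _ hU
  set 𝒮 := 𝒢.toGroupoidStruct
  rw [Function.Involutive.image_eq_preimage_symm 𝒮.inv_inv] at hninv
  rw [conv_indicator_of_subset_units_left 𝒮 (hU.trans (𝒮.image_src_subset_units _))]
  refine conv_eq_indicator_of_isBisection 𝒮 hmb subset_rfl
    (fun _ hb => hninv ▸ (Set.indicator_apply_ne_zero.mp hb).2) Set.inter_subset_left
    fun a ha => ?_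
  by_cases haU : 𝒮.src a ∈ U
  · have ha' : 𝒮.inv a ∈ 𝒮.rng ⁻¹' U := by rwa [Set.mem_preimage, 𝒮.rng_inv]
    rw [Set.indicator_of_mem ha', Set.indicator_of_mem (Set.mem_inter ha haU),
      mul_apply_inv_eq_one_of_conv_conv_eq 𝒮 hmb hninv hnorm.2.2.2.2 ha]
  · have ha' : 𝒮.inv a ∉ 𝒮.rng ⁻¹' U := by rwa [Set.mem_preimage, 𝒮.rng_inv]
    rw [Set.indicator_of_notMem ha', Set.indicator_of_notMem fun h => haU h.2, mul_zero]

/-- If `(m, n)` is a normaliser of `D_R(G)` graded by `(g, g⁻¹)` such that `supp m` is a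
compact open bisection and `supp n = (supp m)⁻¹`, then for every compact open
`U ⊆ s(supp m)` one has `m * 1_U * n = 1_{r(supp m ∩ s⁻¹(U))}`. -/
theorem normaliser_conjugation_indicator {G : Type*} [TopologicalSpace G] [T2Space G]
    {R : Type*} [CommRing R] [IsDomain R] (𝒢 : AmpleGroupoid G)
    {Γ : Type*} [Group Γ] (c : G → Γ) (hc : 𝒢.toGroupoidStruct.IsCocycle c)
    (hcont : IsLocallyConstant c) (g : Γ) (m n : G → R)
    (hnorm : IsNormaliser 𝒢.toGroupoidStruct R m n)
    (hm : InGrade c g m) (hn : InGrade c g⁻¹ n)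
    (hmc : IsCompact (Function.support m)) (hmo : IsOpen (Function.support m))
    (hmb : 𝒢.toGroupoidStruct.IsBisection (Function.support m))
    (hninv : Function.support n = 𝒢.toGroupoidStruct.inv '' Function.support m) :
    ∀ U : Set G, IsCompact U → IsOpen U →
      U ⊆ 𝒢.toGroupoidStruct.src '' Function.support m →
      conv 𝒢.toGroupoidStruct m
          (conv 𝒢.toGroupoidStruct (Set.indicator U (fun _ => (1 : R))) n)
        = Set.indicator
            (𝒢.toGroupoidStruct.rng ''
              (Function.support m ∩ 𝒢.toGroupoidStruct.src ⁻¹' U))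
            (fun _ => (1 : R)) :=
  normaliser_conjugation_indicator_general 𝒢 m n hnorm hmb hninv
end
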